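/- Let J : S → ℝ be an approximate value function and define the TD error δ = R_{t+1} + γ(S_{t+1})·J(S_{t+1}) − J(S_t). Assume: (i) μ-almost everywhere, G = R_{t+1} + γ(S_{t+1})·(1 − λ(S_{t+1}))·J(S_{t+1}) + γ(S_{t+1})·λ(S_{t+1})·G' (the λ-return recursion bootstrapped with J); (ii) for every state s with μ(S_t = s) > 0, j(s) = E[G | S_t = s] and V(s) = E[(G − j(s))² | S_t = s]; (iii) μ-almost everywhere the conditional expectation of G' given 𝒢 equals j(S_{t+1}); (iv) μ-almost everywhere the conditional expectation of (G' − J(S_{t+1}))² given 𝒢 equals V(S_{t+1}); and (v) there is a function ε : S → [0, ∞) such that (J(s) − j(s))² ≤ ε(s) for all s, and |E[ γ(S_{t+1})·λ(S_{t+1})·δ·(j(S_{t+1}) − J(S_{t+1})) | S_t = s ]| ≤ ε(s) for every s with μ(S_t = s) > 0. Then for every state s with μ(S_t = s) > 0: | V(s) − E[ δ² + γ(S_{t+1})²·λ(S_{t+1})²·V(S_{t+1}) | S_t = s ] | ≤ 3·ε(s). -/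

import Mathlib

open MeasureTheory ProbabilityTheory
open scoped ENNReal

/-! On the event `{S_t = s}` the recursion reads `G - J s = δ + γλ·D` with `D = G' - J(S_{t+1})`,
so `V s` is the second moment of `δ + γλ·D` minus `(j s - J s)²`. As `δ` and `γλ` are
`𝒢`-measurable and `{S_t = s} ∈ 𝒢`, the tower property replaces `D` by `j - J` and `D²` by `V`
at `S_{t+1}`. What remains of the Bellman equation is `2 E[γλδ(j - J) | S_t = s] - (j s - J s)²`,
of size at most `2ε s + ε s`. -/

lemma MeasureTheory.MemLp.cond {Ω E : Type*} [MeasurableSpace Ω] [NormedAddCommGroup E]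
    {μ : Measure Ω} {p : ℝ≥0∞} {f : Ω → E} (hf : MemLp f p μ) (s : Set Ω) : MemLp f p μ[|s] := by
  rcases eq_or_ne (μ s) 0 with hs | hs
  · simp [cond_eq_zero_of_meas_eq_zero hs]
  · exact (hf.restrict s).smul_measure (ENNReal.inv_ne_top.mpr hs)

lemma memLp_top_comp_of_finite {Ω S : Type*} [MeasurableSpace Ω] [MeasurableSpace S]
    [Finite S] [MeasurableSingletonClass S] {μ : Measure Ω} {f : Ω → S} (hf : Measurable f)
    (h : S → ℝ) : MemLp (fun ω => h (f ω)) ∞ μ := by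
  obtain ⟨C, hC⟩ := (Set.finite_range fun x => ‖h x‖).bddAbove
  exact memLp_top_of_bound ((measurable_of_countable h).comp hf).aestronglyMeasurable C
    (ae_of_all _ fun ω => hC ⟨f ω, rfl⟩)

lemma integral_sub_integral_sq_of_ae_eq_add_const {Ω : Type*} [MeasurableSpace Ω]
    {ν : Measure Ω} [IsProbabilityMeasure ν] {G X : Ω → ℝ} {k : ℝ} (hX : MemLp X 2 ν)
    (hG : G =ᵐ[ν] fun ω => X ω + k) :
    ∫ ω, (G ω - ∫ ω', G ω' ∂ν) ^ 2 ∂ν = ∫ ω, X ω ^ 2 ∂ν - (∫ ω, G ω ∂ν - k) ^ 2 := by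
  have hmean : ∫ ω, G ω ∂ν - k = ∫ ω, X ω ∂ν := by
    rw [integral_congr_ae hG, integral_add (hX.integrable one_le_two) (integrable_const k)]
    simp
  have hG_meas : AEMeasurable G ν :=
    ((hX.aestronglyMeasurable.add_const k).congr hG.symm).aemeasurable
  rw [hmean, ← variance_eq_integral hG_meas, variance_congr hG,
    variance_add_const hX.aestronglyMeasurable, variance_eq_sub hX]
  rfl

section CondExp

variable {Ω : Type*} {m m₀ : MeasurableSpace Ω} {μ : Measure Ω}

lemma integral_cond_condExp {E : Type*} [NormedAddCommGroup E] [NormedSpace ℝ E]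
    [CompleteSpace E] (hm : m ≤ m₀) [SigmaFinite (μ.trim hm)] {A : Set Ω}
    (hA : MeasurableSet[m] A) {X : Ω → E} (hX : Integrable X μ) :
    ∫ ω, μ[X | m] ω ∂μ[|A] = ∫ ω, X ω ∂μ[|A] := by
  rw [ProbabilityTheory.cond, integral_smul_measure, integral_smul_measure,
    setIntegral_condExp hm hX hA]

lemma condExp_sub_stronglyMeasurable (hm : m ≤ m₀) [SigmaFinite (μ.trim hm)]
    {X Y g : Ω → ℝ} (hX : Integrable X μ) (hg : StronglyMeasurable[m] g) (hgi : Integrable g μ)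
    (hXY : μ[X | m] =ᵐ[μ] Y) : μ[X - g | m] =ᵐ[μ] Y - g := by
  filter_upwards [condExp_sub hX hgi m, hXY] with ω hsub hω
  rw [hsub, Pi.sub_apply, hω, condExp_of_stronglyMeasurable hm hg hgi]
  rfl

variable [IsFiniteMeasure μ] {a b D E₁ E₂ : Ω → ℝ}

lemma condExp_sq_add_mul (hm : m ≤ m₀) (ha : StronglyMeasurable[m] a)
    (hb : StronglyMeasurable[m] b) (ha_top : MemLp a ∞ μ) (hb_top : MemLp b ∞ μ)
    (hD : MemLp D 2 μ) (hD₁ : μ[D | m] =ᵐ[μ] E₁) (hD₂ : μ[fun ω => D ω ^ 2 | m] =ᵐ[μ] E₂) :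
    μ[fun ω => (a ω + b ω * D ω) ^ 2 | m]
      =ᵐ[μ] fun ω => a ω ^ 2 + 2 * (a ω * b ω * E₁ ω) + b ω ^ 2 * E₂ ω := by
  set c : Ω → ℝ := fun ω => 2 * (a ω * b ω)
  have hexp : (fun ω => (a ω + b ω * D ω) ^ 2)
      = a ^ 2 + c * D + b ^ 2 * fun ω => D ω ^ 2 := by
    ext ω; simp only [c, Pi.add_apply, Pi.mul_apply, Pi.pow_apply]; ring
  have hD₁i : Integrable D μ := hD.integrable one_le_two
  have hD₂i : Integrable (fun ω => D ω ^ 2) μ := hD.integrable_sq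
  have h₁ : Integrable (a ^ 2) μ := by
    simpa only [sq] using (ha_top.mul ha_top (r := ∞)).integrable le_top
  have h₂ : Integrable (c * D) μ :=
    (hD.mul ((hb_top.mul ha_top (r := ∞)).const_mul 2) (r := 2)).integrable one_le_two
  have h₃ : Integrable (b ^ 2 * fun ω => D ω ^ 2) μ := by
    simpa only [sq] using (memLp_one_iff_integrable.mpr hD₂i).mul (hb_top.mul hb_top (r := ∞))
      (r := 1) |>.integrable le_rfl
  have hc : StronglyMeasurable[m] c := (ha.mul hb).const_mul 2
  rw [hexp]
  filter_upwards [condExp_add (h₁.add h₂) h₃ m, condExp_add h₁ h₂ m,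
    condExp_mul_of_stronglyMeasurable_left (m := m) hc h₂ hD₁i,
    condExp_mul_of_stronglyMeasurable_left (m := m) (hb.pow 2) h₃ hD₂i, hD₁, hD₂]
    with ω e₁ e₂ e₃ e₄ e₅ e₆
  rw [e₁, Pi.add_apply, e₂, Pi.add_apply, e₃, e₄,
    condExp_of_stronglyMeasurable hm (ha.pow 2) h₁]
  simp only [c, Pi.mul_apply, Pi.pow_apply, e₅, e₆]
  ring

lemma integral_cond_sq_add_mul (hm : m ≤ m₀) {A : Set Ω} (hA : MeasurableSet[m] A)
    (ha : StronglyMeasurable[m] a) (hb : StronglyMeasurable[m] b) (ha_top : MemLp a ∞ μ)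
    (hb_top : MemLp b ∞ μ) (hD : MemLp D 2 μ) (hE₁ : MemLp E₁ ∞ μ) (hE₂ : MemLp E₂ ∞ μ)
    (hD₁ : μ[D | m] =ᵐ[μ] E₁) (hD₂ : μ[fun ω => D ω ^ 2 | m] =ᵐ[μ] E₂) :
    ∫ ω, (a ω + b ω * D ω) ^ 2 ∂μ[|A]
      = ∫ ω, (a ω ^ 2 + b ω ^ 2 * E₂ ω) ∂μ[|A] + 2 * ∫ ω, b ω * a ω * E₁ ω ∂μ[|A] := by
  have hX : MemLp (fun ω => a ω + b ω * D ω) 2 μ :=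
    (ha_top.mono_exponent le_top).add (hD.mul hb_top (r := 2))
  have h₁ : Integrable (fun ω => a ω ^ 2 + b ω ^ 2 * E₂ ω) μ[|A] :=
    (((ha_top.mul ha_top (r := ∞)).add (hE₂.mul (hb_top.mul hb_top (r := ∞)) (r := ∞))).cond A
      |>.integrable le_top).congr (ae_of_all _ fun ω => by
        simp only [Pi.add_apply, Pi.mul_apply]; ring)
  have h₂ : Integrable (fun ω => b ω * a ω * E₁ ω) μ[|A] :=
    ((hE₁.mul (ha_top.mul hb_top (r := ∞)) (r := ∞)).cond A).integrable le_top
  rw [← integral_cond_condExp hm hA hX.integrable_sq,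
    integral_congr_ae (cond_absolutelyContinuous
      (condExp_sq_add_mul hm ha hb ha_top hb_top hD hD₁ hD₂)),
    ← integral_const_mul, ← integral_add h₁ (h₂.const_mul 2)]
  congr 1
  ext ω
  ring

lemma integral_cond_sub_integral_sq_eq (hm : m ≤ m₀) {A : Set Ω} (hA : MeasurableSet[m] A)
    (hμA : μ A ≠ 0) (ha : StronglyMeasurable[m] a) (hb : StronglyMeasurable[m] b)
    (ha_top : MemLp a ∞ μ) (hb_top : MemLp b ∞ μ) (hD : MemLp D 2 μ) (hE₁ : MemLp E₁ ∞ μ)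
    (hE₂ : MemLp E₂ ∞ μ) (hD₁ : μ[D | m] =ᵐ[μ] E₁) (hD₂ : μ[fun ω => D ω ^ 2 | m] =ᵐ[μ] E₂)
    {G : Ω → ℝ} {k : ℝ} (hG : G =ᵐ[μ[|A]] fun ω => a ω + b ω * D ω + k) :
    ∫ ω, (G ω - ∫ ω', G ω' ∂μ[|A]) ^ 2 ∂μ[|A]
      = ∫ ω, (a ω ^ 2 + b ω ^ 2 * E₂ ω) ∂μ[|A] + 2 * ∫ ω, b ω * a ω * E₁ ω ∂μ[|A]
        - (∫ ω, G ω ∂μ[|A] - k) ^ 2 := by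
  have := cond_isProbabilityMeasure hμA
  have hX : MemLp (fun ω => a ω + b ω * D ω) 2 μ :=
    (ha_top.mono_exponent le_top).add (hD.mul hb_top (r := 2))
  rw [integral_sub_integral_sq_of_ae_eq_add_const (hX.cond A) hG,
    integral_cond_sq_add_mul hm hA ha hb ha_top hb_top hD hE₁ hE₂ hD₁ hD₂]

end CondExp

theorem variance_bellman_approx_error_general {Ω : Type*} [MeasurableSpace Ω] (μ : Measure Ω)
    [IsProbabilityMeasure μ]
    {S : Type*} [Fintype S] [MeasurableSpace S] [MeasurableSingletonClass S]
    (St St1 : Ω → S) (R G G' : Ω → ℝ)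
    (hSt : Measurable St) (hSt1 : Measurable St1)
    (hR : Measurable R)
    (hG'sq : MemLp G' 2 μ) (hRbd : ∃ C, ∀ ω, |R ω| ≤ C)
    (γ lam : S → ℝ)
    (j V J : S → ℝ)
    (δ : Ω → ℝ) (hδ : δ = fun ω => R ω + γ (St1 ω) * J (St1 ω) - J (St ω))
    -- (i) the λ-return recursion bootstrapped with J
    (hrec : ∀ᵐ ω ∂μ, G ω = R ω + γ (St1 ω) * (1 - lam (St1 ω)) * J (St1 ω)
        + γ (St1 ω) * lam (St1 ω) * G' ω)
    -- (ii) j and V are the conditional mean and variance of G given S_t = s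
    (hj : ∀ s : S, 0 < μ {ω | St ω = s} → j s = ∫ ω, G ω ∂(μ[|{ω | St ω = s}]))
    (hV : ∀ s : S, 0 < μ {ω | St ω = s} →
        V s = ∫ ω, (G ω - j s) ^ 2 ∂(μ[|{ω | St ω = s}]))
    -- (iii) conditional expectation of G' given 𝒢 equals j(S_{t+1})
    (hcondG' : μ[G' | MeasurableSpace.comap (fun ω => (St ω, R ω, St1 ω)) inferInstance]
        =ᵐ[μ] fun ω => j (St1 ω))
    -- (iv) conditional expectation of (G' − J(S_{t+1}))² given 𝒢 equals V(S_{t+1})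
    (hcondVar : μ[(fun ω => (G' ω - J (St1 ω)) ^ 2) |
          MeasurableSpace.comap (fun ω => (St ω, R ω, St1 ω)) inferInstance]
        =ᵐ[μ] fun ω => V (St1 ω))
    -- (v) error bounds
    (ε : S → ℝ)
    (hJerr : ∀ s, (J s - j s) ^ 2 ≤ ε s)
    (hcov : ∀ s : S, 0 < μ {ω | St ω = s} →
        |∫ ω, γ (St1 ω) * lam (St1 ω) * δ ω * (j (St1 ω) - J (St1 ω))
            ∂(μ[|{ω | St ω = s}])| ≤ ε s) :
    ∀ s : S, 0 < μ {ω | St ω = s} →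
      |V s - ∫ ω, (δ ω ^ 2 + γ (St1 ω) ^ 2 * lam (St1 ω) ^ 2 * V (St1 ω))
          ∂(μ[|{ω | St ω = s}])| ≤ 3 * ε s := by
  intro s hs
  have hm := (hSt.prodMk (hR.prodMk hSt1)).comap_le
  have hT_m : Measurable[MeasurableSpace.comap (fun ω => (St ω, R ω, St1 ω)) inferInstance]
      fun ω => (St ω, R ω, St1 ω) := comap_measurable _
  have hSt_m := measurable_fst.comp hT_m
  have hR_m := (measurable_fst.comp measurable_snd).comp hT_m
  have hSt1_m := (measurable_snd.comp measurable_snd).comp hT_m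
  obtain ⟨C, hC⟩ := hRbd
  have hδ_top : MemLp δ ∞ μ := by
    rw [hδ]
    exact ((memLp_top_of_bound hR.aestronglyMeasurable C (ae_of_all _ hC)).add
      (memLp_top_comp_of_finite hSt1 fun x => γ x * J x)).sub (memLp_top_comp_of_finite hSt J)
  have hcondD := condExp_sub_stronglyMeasurable hm (hG'sq.integrable one_le_two) (by fun_prop)
    ((memLp_top_comp_of_finite hSt1 J).integrable le_top) hcondG'
  have hG_eq : G =ᵐ[μ[|{ω | St ω = s}]]
      fun ω => δ ω + γ (St1 ω) * lam (St1 ω) * (G' ω - J (St1 ω)) + J s := by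
    filter_upwards [cond_absolutelyContinuous hrec,
      ae_cond_mem (hSt (measurableSet_singleton s))] with ω hω hωs
    simp only [hω, hδ, hωs]
    ring
  rw [hV s hs, hj s hs, integral_cond_sub_integral_sq_eq (A := {ω | St ω = s})
    (b := fun ω => γ (St1 ω) * lam (St1 ω)) (D := fun ω => G' ω - J (St1 ω))
    hm (hSt_m (measurableSet_singleton s)) hs.ne'
    (by rw [hδ]; fun_prop) (by fun_prop) hδ_top
    (memLp_top_comp_of_finite hSt1 fun x => γ x * lam x)
    (hG'sq.sub ((memLp_top_comp_of_finite hSt1 J).mono_exponent le_top))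
    (memLp_top_comp_of_finite hSt1 fun x => j x - J x) (memLp_top_comp_of_finite hSt1 V)
    hcondD hcondVar hG_eq, ← hj s hs]
  simp only [mul_pow]
  have hcov_s := abs_le.mp (hcov s hs)
  rw [abs_le]
  constructor <;> linarith [hJerr s, sq_nonneg (j s - J s)]

/-- Error bound for the Bellman equation of the variance of the λ-return when the value
function `J` used for bootstrapping is inexact: the error in the TD fixed-point equation
for the variance `V` is at most `3·ε s`. -/
theorem variance_bellman_approx_error {Ω : Type*} [MeasurableSpace Ω] (μ : Measure Ω)
    [IsProbabilityMeasure μ]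
    {S : Type*} [Fintype S] [Nonempty S] [MeasurableSpace S] [MeasurableSingletonClass S]
    (St St1 : Ω → S) (R G G' : Ω → ℝ)
    (hSt : Measurable St) (hSt1 : Measurable St1)
    (hR : Measurable R) (hG : Measurable G) (hG' : Measurable G')
    (hGsq : MemLp G 2 μ) (hG'sq : MemLp G' 2 μ) (hRbd : ∃ C, ∀ ω, |R ω| ≤ C)
    (γ lam : S → ℝ) (hγ : ∀ s, γ s ∈ Set.Icc (0 : ℝ) 1) (hlam : ∀ s, lam s ∈ Set.Icc (0 : ℝ) 1)
    (j V J : S → ℝ)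
    (δ : Ω → ℝ) (hδ : δ = fun ω => R ω + γ (St1 ω) * J (St1 ω) - J (St ω))
    -- (i) the λ-return recursion bootstrapped with J
    (hrec : ∀ᵐ ω ∂μ, G ω = R ω + γ (St1 ω) * (1 - lam (St1 ω)) * J (St1 ω)
        + γ (St1 ω) * lam (St1 ω) * G' ω)
    -- (ii) j and V are the conditional mean and variance of G given S_t = s
    (hj : ∀ s : S, 0 < μ {ω | St ω = s} → j s = ∫ ω, G ω ∂(μ[|{ω | St ω = s}]))
    (hV : ∀ s : S, 0 < μ {ω | St ω = s} →
        V s = ∫ ω, (G ω - j s) ^ 2 ∂(μ[|{ω | St ω = s}]))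
    -- (iii) conditional expectation of G' given 𝒢 equals j(S_{t+1})
    (hcondG' : μ[G' | MeasurableSpace.comap (fun ω => (St ω, R ω, St1 ω)) inferInstance]
        =ᵐ[μ] fun ω => j (St1 ω))
    -- (iv) conditional expectation of (G' − J(S_{t+1}))² given 𝒢 equals V(S_{t+1})
    (hcondVar : μ[(fun ω => (G' ω - J (St1 ω)) ^ 2) |
          MeasurableSpace.comap (fun ω => (St ω, R ω, St1 ω)) inferInstance]
        =ᵐ[μ] fun ω => V (St1 ω))
    -- (v) error bounds
    (ε : S → ℝ) (hε : ∀ s, 0 ≤ ε s)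
    (hJerr : ∀ s, (J s - j s) ^ 2 ≤ ε s)
    (hcov : ∀ s : S, 0 < μ {ω | St ω = s} →
        |∫ ω, γ (St1 ω) * lam (St1 ω) * δ ω * (j (St1 ω) - J (St1 ω))
            ∂(μ[|{ω | St ω = s}])| ≤ ε s) :
    ∀ s : S, 0 < μ {ω | St ω = s} →
      |V s - ∫ ω, (δ ω ^ 2 + γ (St1 ω) ^ 2 * lam (St1 ω) ^ 2 * V (St1 ω))
          ∂(μ[|{ω | St ω = s}])| ≤ 3 * ε s :=
  variance_bellman_approx_error_general μ St St1 R G G' hSt hSt1 hR hG'sq hRbd γ lam j V J δ hδ hrec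
    hj hV hcondG' hcondVar ε hJerr hcov
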